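/- arXiv:1112.1859 — 2 statements merged into one kernel-verified Lean document; each statement's English description precedes it below -/
import Mathlib

section
/- The fixed-shape (traditional smoothed) particle method does not converge for the rigid rotation of angle π/4 applied to the constant density 1 with tensor hat particles: Σ_{k∈ℤ²} φ(R k) = 1 + 2(√2 − 1)², where φ(x₁,x₂) := max(1−|x₁|,0)·max(1−|x₂|,0) and R is the rotation of ℝ² by angle π/4. Consequently, for every h > 0 the fixed-shape particle approximation Σ_{k∈ℤ²} h² · h^{−2} φ(h^{−1}(x − R(hk))) of the exact transported solution f ≡ 1 has, at the point x = 0, the error 2(√2 − 1)², independently of h. -/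
/-!
Since `R k = ((k₁ - k₂)/√2, (k₁ + k₂)/√2)` and `√2 < 2`, the hat `φ` vanishes at `R k` unless
`|k₁ - k₂| ≤ 1` and `|k₁ + k₂| ≤ 1`, i.e. unless `k` is the origin or one of its four lattice
neighbours. The origin contributes `1`; each neighbour lands at `(±1/√2, ±1/√2)` and contributes
`(1 - 1/√2)² = (√2 - 1)²/2`, which gives `Σ φ(R k) = 1 + 2(√2 - 1)²`. Because `R` is linear and `φ`
is even, the particle sum at `x = 0` with spacing `h` is the same sum for every `h`.
-/

/-- Two-dimensional tensor-product hat function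
`φ(x₁,x₂) := max(1−|x₁|,0) · max(1−|x₂|,0)`. -/
noncomputable def hatFn (p : ℝ × ℝ) : ℝ :=
  max (1 - |p.1|) 0 * max (1 - |p.2|) 0

/-- Rotation of `ℝ²` by angle `π/4` about the origin. -/
noncomputable def rotQuarterPi (p : ℝ × ℝ) : ℝ × ℝ :=
  ((p.1 - p.2) / Real.sqrt 2, (p.1 + p.2) / Real.sqrt 2)

open Real

lemma hatFn_neg (p : ℝ × ℝ) : hatFn (-p) = hatFn p := by
  simp only [hatFn, Prod.fst_neg, Prod.snd_neg, abs_neg]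

lemma hatFn_eq_zero_of_one_le_abs_fst {p : ℝ × ℝ} (hp : 1 ≤ |p.1|) : hatFn p = 0 := by
  rw [hatFn, max_eq_right (sub_nonpos.2 hp), zero_mul]

lemma hatFn_eq_zero_of_one_le_abs_snd {p : ℝ × ℝ} (hp : 1 ≤ |p.2|) : hatFn p = 0 := by
  rw [hatFn, max_eq_right (sub_nonpos.2 hp), mul_zero]

lemma hatFn_of_abs_eq_inv_sqrt_two {p : ℝ × ℝ} (h₁ : |p.1| = (√2)⁻¹) (h₂ : |p.2| = (√2)⁻¹) :
    hatFn p = (√2 - 1) ^ 2 / 2 := by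
  rw [hatFn, h₁, h₂, max_eq_left (sub_nonneg.2 (inv_le_one_of_one_le₀ one_lt_sqrt_two.le))]
  field_simp
  nlinarith [sq_sqrt (zero_le_two : (0 : ℝ) ≤ 2)]

lemma rotQuarterPi_smul (c : ℝ) (p : ℝ × ℝ) : rotQuarterPi (c • p) = c • rotQuarterPi p := by
  simp only [rotQuarterPi, Prod.smul_fst, Prod.smul_snd, smul_eq_mul, Prod.smul_mk]
  congr 1 <;> ring

lemma one_le_abs_intCast_div_sqrt_two {n : ℤ} (hn : 2 ≤ |n|) : 1 ≤ |(n : ℝ) / √2| := by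
  have hn' : (2 : ℝ) ≤ |(n : ℝ)| := by exact_mod_cast hn
  rw [abs_div, abs_of_pos (sqrt_pos.2 zero_lt_two), one_le_div (sqrt_pos.2 zero_lt_two)]
  linarith [sqrt_two_lt_three_halves]

def latticeNeighbors : Finset (ℤ × ℤ) := {(0, 0), (1, 0), (-1, 0), (0, 1), (0, -1)}

lemma hatFn_rotQuarterPi_intCast_eq_zero {k : ℤ × ℤ} (hk : k ∉ latticeNeighbors) :
    hatFn (rotQuarterPi (k.1, k.2)) = 0 := by
  obtain ⟨a, b⟩ := k
  simp only [latticeNeighbors, Finset.mem_insert, Finset.mem_singleton, Prod.mk.injEq,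
    not_or] at hk
  have hfar : 2 ≤ |a - b| ∨ 2 ≤ |a + b| := by
    simp only [le_abs]
    omega
  rcases hfar with h | h
  · apply hatFn_eq_zero_of_one_le_abs_fst
    simpa [rotQuarterPi] using one_le_abs_intCast_div_sqrt_two h
  · apply hatFn_eq_zero_of_one_le_abs_snd
    simpa [rotQuarterPi] using one_le_abs_intCast_div_sqrt_two h

lemma hatFn_rotQuarterPi_of_abs_eq_one {p : ℝ × ℝ} (h₁ : |p.1 - p.2| = 1)
    (h₂ : |p.1 + p.2| = 1) : hatFn (rotQuarterPi p) = (√2 - 1) ^ 2 / 2 := by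
  apply hatFn_of_abs_eq_inv_sqrt_two <;>
    simp only [rotQuarterPi, abs_div, h₁, h₂, abs_of_pos (sqrt_pos.2 zero_lt_two), one_div]

theorem tsum_hatFn_rotQuarterPi_intCast :
    ∑' k : ℤ × ℤ, hatFn (rotQuarterPi (k.1, k.2)) = 1 + 2 * (√2 - 1) ^ 2 := by
  rw [tsum_eq_sum fun _ ↦ hatFn_rotQuarterPi_intCast_eq_zero]
  have hzero : hatFn (rotQuarterPi (0, 0)) = 1 := by simp [hatFn, rotQuarterPi]
  norm_num [latticeNeighbors, hzero, hatFn_rotQuarterPi_of_abs_eq_one]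
  ring

lemma particle_contribution_at_zero {h : ℝ} (hh : h ≠ 0) (a b : ℝ) :
    h ^ 2 * ((h ^ 2)⁻¹ * hatFn ((0 - (rotQuarterPi (h * a, h * b)).1) / h,
      (0 - (rotQuarterPi (h * a, h * b)).2) / h)) = hatFn (rotQuarterPi (a, b)) := by
  have hscale : rotQuarterPi (h * a, h * b) = h • rotQuarterPi (a, b) :=
    rotQuarterPi_smul h (a, b)
  rw [mul_inv_cancel_left₀ (pow_ne_zero 2 hh), hscale, ← hatFn_neg]
  congr 1
  ext <;> simp [neg_div, mul_div_cancel_left₀ _ hh]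

/-- the fixed-shape particle method does not converge for the rigid rotation
of angle `π/4` applied to the constant density `1` with tensor hat particles:
`Σ_{k∈ℤ²} φ(R k) = 1 + 2(√2 − 1)²`, and consequently for every `h > 0` the fixed-shape
particle approximation of the exact solution `f ≡ 1` has, at the point `x = 0`, the error
`2(√2 − 1)²`, independently of `h`. -/
theorem fixed_shape_particles_do_not_converge :
    (∑' k : ℤ × ℤ, hatFn (rotQuarterPi ((k.1 : ℝ), (k.2 : ℝ))))
        = 1 + 2 * (Real.sqrt 2 - 1) ^ 2 ∧
    ∀ h : ℝ, 0 < h →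
      |(∑' k : ℤ × ℤ, h ^ 2 *
            ((h ^ 2)⁻¹ * hatFn
              ((0 - (rotQuarterPi (h * (k.1 : ℝ), h * (k.2 : ℝ))).1) / h,
               (0 - (rotQuarterPi (h * (k.1 : ℝ), h * (k.2 : ℝ))).2) / h)))
          - 1|
        = 2 * (Real.sqrt 2 - 1) ^ 2 := by
  refine ⟨tsum_hatFn_rotQuarterPi_intCast, fun h hh ↦ ?_⟩
  rw [tsum_congr fun k : ℤ × ℤ ↦ particle_contribution_at_zero hh.ne' k.1 k.2,
    tsum_hatFn_rotQuarterPi_intCast, add_sub_cancel_left]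
  exact abs_of_nonneg (by positivity)
end

section
/- The quasi-interpolation scheme with cubic B-splines and coefficients (a₀, a₁) = (8/6, −1/6) reproduces polynomials of degree at most three: for every polynomial q : ℝ → ℝ of degree ≤ 3 and every x ∈ ℝ, Σ_{k∈ℤ} ((8/6) q(k) − (1/6) q(k−1) − (1/6) q(k+1)) · 𝓑₃(x − k) = q(x). -/
/-!
`𝓑_p` is the recentred `(p+1)`-st unit forward difference of the truncated power `t₊^p / p!`:
`𝓑_p(x) = Δ^{p+1}(t₊^p / p!)(x - (p+1)/2)`, almost everywhere for `p = 0` and everywhere for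
`p ≥ 1`. Indeed, integrating over a unit window is the forward difference of an antiderivative,
and `t₊^{p+1} / (p+1)!` is an antiderivative of `t₊^p / p!` away from `0`. Hence `𝓑₃` is an
explicit piecewise cubic, and for `x = n + y` with `n ∈ ℤ`, `y ∈ [0, 1]` only the terms
`k = n - 1, …, n + 2` of the series survive; the claim becomes a polynomial identity in `n`, `y`
and the coefficients of `q`.
-/

open MeasureTheory Set fwdDiff

/-- Centered cardinal B-splines: `𝓑₀ = χ_{[−1/2,1/2]}` and
`𝓑_p(x) = ∫_{x−1/2}^{x+1/2} 𝓑_{p−1}(t) dt`. -/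
noncomputable def Bspline : ℕ → ℝ → ℝ
  | 0 => Set.indicator (Set.Icc (-(1 : ℝ) / 2) (1 / 2)) (fun _ => (1 : ℝ))
  | p + 1 => fun x => ∫ t in (x - 1 / 2)..(x + 1 / 2), Bspline p t

/-- `t₊^p / p!`, with value `0` at `t = 0` even for `p = 0`. -/
noncomputable def truncPow (p : ℕ) : ℝ → ℝ :=
  (Ioi 0).indicator fun y => y ^ p / p.factorial

lemma truncPow_of_pos {p : ℕ} {y : ℝ} (hy : 0 < y) : truncPow p y = y ^ p / p.factorial :=
  indicator_of_mem hy _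

lemma truncPow_of_nonpos {p : ℕ} {y : ℝ} (hy : y ≤ 0) : truncPow p y = 0 :=
  indicator_of_notMem (not_lt.2 hy) _

lemma truncPow_succ_of_nonneg {p : ℕ} {y : ℝ} (hy : 0 ≤ y) :
    truncPow (p + 1) y = y ^ (p + 1) / (p + 1).factorial := by
  rcases hy.eq_or_lt with rfl | hy
  · simp [truncPow_of_nonpos le_rfl]
  · exact truncPow_of_pos hy

lemma continuous_truncPow_succ (p : ℕ) : Continuous (truncPow (p + 1)) := by
  have : truncPow (p + 1) = fun y : ℝ => max y 0 ^ (p + 1) / ((p + 1).factorial : ℝ) := by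
    ext y
    rcases le_or_gt y 0 with hy | hy
    · simp [truncPow_of_nonpos hy, max_eq_right hy]
    · simp [truncPow_of_pos hy, max_eq_left hy.le]
  rw [this]
  fun_prop

lemma hasDerivAt_truncPow_succ (p : ℕ) {y : ℝ} (hy : y ≠ 0) :
    HasDerivAt (truncPow (p + 1)) (truncPow p y) y := by
  rcases hy.lt_or_gt with hy | hy
  · rw [truncPow_of_nonpos hy.le]
    exact (hasDerivAt_const y 0).congr_of_eventuallyEq <|
      Filter.eventually_of_mem (Iio_mem_nhds hy) fun t ht => truncPow_of_nonpos ht.le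
  · rw [truncPow_of_pos hy]
    have h := ((hasDerivAt_pow (p + 1) y).div_const ((p + 1).factorial : ℝ))
    refine (h.congr_deriv ?_).congr_of_eventuallyEq <|
      Filter.eventually_of_mem (Ioi_mem_nhds hy) fun t ht => truncPow_of_pos ht
    rw [Nat.factorial_succ]
    push_cast
    field_simp

lemma intervalIntegrable_truncPow (p : ℕ) (a b : ℝ) :
    IntervalIntegrable (truncPow p) volume a b := by
  rw [intervalIntegrable_iff]
  exact (((continuous_pow p).div_const _).integrableOn_uIoc).indicator measurableSet_Ioi

lemma Continuous.fwdDiff_iter {M G : Type*} [TopologicalSpace M] [AddCommMonoid M]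
    [ContinuousAdd M] [TopologicalSpace G] [AddCommGroup G] [IsTopologicalAddGroup G]
    {f : M → G} (hf : Continuous f) (h : M) (n : ℕ) :
    Continuous ((Δ_[h])^[n] f) := by
  induction n with
  | zero => exact hf
  | succ n ih =>
    rw [Function.iterate_succ_apply']
    exact (ih.comp (continuous_add_const h)).sub ih

lemma IntervalIntegrable.fwdDiff_iter {E : Type*} [NormedAddCommGroup E] {f : ℝ → E}
    (hf : ∀ a b, IntervalIntegrable f volume a b) (h : ℝ) (n : ℕ) (a b : ℝ) :
    IntervalIntegrable ((Δ_[h])^[n] f) volume a b := by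
  induction n generalizing a b with
  | zero => exact hf a b
  | succ n ih =>
    rw [Function.iterate_succ_apply']
    have hshift := (ih (a + h) (b + h)).comp_add_right h
    rw [add_sub_cancel_right, add_sub_cancel_right] at hshift
    exact hshift.sub (ih a b)

lemma hasDerivAt_fwdDiff_iter_of_notMem_range_intCast {E : Type*} [NormedAddCommGroup E]
    [NormedSpace ℝ E] {f f' : ℝ → E}
    (hf : ∀ y ∉ range ((↑) : ℤ → ℝ), HasDerivAt f (f' y) y) (n : ℕ) :
    ∀ y ∉ range ((↑) : ℤ → ℝ), HasDerivAt ((Δ_[1])^[n] f) (((Δ_[1])^[n] f') y) y := by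
  induction n with
  | zero => exact hf
  | succ n ih =>
    intro y hy
    have hy1 : y + 1 ∉ range ((↑) : ℤ → ℝ) := by
      rintro ⟨k, hk⟩
      exact hy ⟨k - 1, by push_cast; linarith⟩
    simp only [Function.iterate_succ_apply']
    exact ((ih _ hy1).comp_add_const y 1).sub (ih y hy)

lemma integral_fwdDiff_iter_truncPow (p n : ℕ) (a b : ℝ) :
    ∫ t in a..b, ((Δ_[1])^[n] (truncPow p)) t =
      ((Δ_[1])^[n] (truncPow (p + 1))) b - ((Δ_[1])^[n] (truncPow (p + 1))) a := by
  refine integral_eq_of_hasDerivAt_off_countable _ _ (countable_range _)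
    ((continuous_truncPow_succ p).fwdDiff_iter 1 n).continuousOn
    (fun y hy => hasDerivAt_fwdDiff_iter_of_notMem_range_intCast ?_ n y hy.2)
    (IntervalIntegrable.fwdDiff_iter (intervalIntegrable_truncPow p) 1 n a b)
  rintro y hy
  exact hasDerivAt_truncPow_succ p fun h => hy ⟨0, by simp [h]⟩

lemma integral_fwdDiff_iter_truncPow_centered (p n : ℕ) (x : ℝ) :
    ∫ t in (x - 1 / 2)..(x + 1 / 2), (Δ_[1])^[n] (truncPow p) (t - n / 2) =
      (Δ_[1])^[n + 1] (truncPow (p + 1)) (x - (n + 1) / 2) := by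
  rw [intervalIntegral.integral_comp_sub_right, integral_fwdDiff_iter_truncPow,
    Function.iterate_succ_apply']
  simp only [fwdDiff]
  ring_nf

lemma Bspline_succ_eq_of_ae_eq {p : ℕ}
    (hp : Bspline p =ᵐ[volume] fun x => (Δ_[1])^[p + 1] (truncPow p) (x - (p + 1) / 2))
    (x : ℝ) :
    Bspline (p + 1) x = (Δ_[1])^[p + 2] (truncPow (p + 1)) (x - (p + 2) / 2) := by
  calc Bspline (p + 1) x
      = ∫ t in (x - 1 / 2)..(x + 1 / 2),
          (Δ_[1])^[p + 1] (truncPow p) (t - ((p + 1 : ℕ) : ℝ) / 2) :=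
        intervalIntegral.integral_congr_ae (hp.mono fun t ht _ => by rw [ht]; push_cast; rfl)
    _ = _ := integral_fwdDiff_iter_truncPow_centered p (p + 1) x
    _ = _ := by push_cast; ring_nf

lemma Bspline_zero_eq_fwdDiff_truncPow_zero {x : ℝ} (hx : x ≠ -1 / 2) :
    Bspline 0 x = Δ_[1] (truncPow 0) (x - 1 / 2) := by
  simp only [Bspline, fwdDiff, truncPow, indicator_apply, mem_Icc, mem_Ioi, pow_zero,
    Nat.factorial_zero, Nat.cast_one, div_one]
  split_ifs <;> grind

lemma Bspline_ae_eq : ∀ p : ℕ,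
    Bspline p =ᵐ[volume] fun x => (Δ_[1])^[p + 1] (truncPow p) (x - (p + 1) / 2)
  | 0 => (countable_singleton (-1 / 2 : ℝ)).ae_notMem volume |>.mono fun x hx => by
    simpa using Bspline_zero_eq_fwdDiff_truncPow_zero hx
  | p + 1 => Filter.Eventually.of_forall fun x => by
    rw [Bspline_succ_eq_of_ae_eq (Bspline_ae_eq p)]
    push_cast
    ring_nf

lemma Bspline_succ_eq (p : ℕ) (x : ℝ) :
    Bspline (p + 1) x = (Δ_[1])^[p + 2] (truncPow (p + 1)) (x - (p + 2) / 2) :=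
  Bspline_succ_eq_of_ae_eq (Bspline_ae_eq p) x

lemma Bspline_three_eq (x : ℝ) : Bspline 3 x =
    truncPow 3 (x - 2) - 4 * truncPow 3 (x - 1) + 6 * truncPow 3 x
      - 4 * truncPow 3 (x + 1) + truncPow 3 (x + 2) := by
  rw [Bspline_succ_eq, fwdDiff_iter_eq_sum_shift]
  simp only [Finset.sum_range_succ, Finset.sum_range_zero, Nat.choose, zsmul_eq_mul,
    nsmul_eq_mul]
  push_cast
  ring_nf

lemma Bspline_three_eq_zero_of_two_le_abs {x : ℝ} (hx : 2 ≤ |x|) : Bspline 3 x = 0 := by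
  rw [Bspline_three_eq]
  rcases le_abs'.1 hx with hx | hx
  · simp (disch := grind) only [truncPow_of_nonpos]
    ring
  · simp (disch := grind) only [truncPow_succ_of_nonneg]
    ring

lemma Bspline_three_add_one {y : ℝ} (h0 : 0 ≤ y) (h1 : y ≤ 1) :
    Bspline 3 (y + 1) = (1 - y) ^ 3 / 6 := by
  rw [Bspline_three_eq]
  simp (disch := grind) only [truncPow_of_nonpos, truncPow_succ_of_nonneg, Nat.factorial]
  ring

lemma Bspline_three_self {y : ℝ} (h0 : 0 ≤ y) (h1 : y ≤ 1) :
    Bspline 3 y = (3 * y ^ 3 - 6 * y ^ 2 + 4) / 6 := by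
  rw [Bspline_three_eq]
  simp (disch := grind) only [truncPow_of_nonpos, truncPow_succ_of_nonneg, Nat.factorial]
  ring

lemma Bspline_three_sub_one {y : ℝ} (h0 : 0 ≤ y) (h1 : y ≤ 1) :
    Bspline 3 (y - 1) = (-3 * y ^ 3 + 3 * y ^ 2 + 3 * y + 1) / 6 := by
  rw [Bspline_three_eq]
  simp (disch := grind) only [truncPow_of_nonpos, truncPow_succ_of_nonneg, Nat.factorial]
  ring

lemma Bspline_three_sub_two {y : ℝ} (h0 : 0 ≤ y) (h1 : y ≤ 1) :
    Bspline 3 (y - 2) = y ^ 3 / 6 := by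
  rw [Bspline_three_eq]
  simp (disch := grind) only [truncPow_of_nonpos, truncPow_succ_of_nonneg, Nat.factorial]
  ring

lemma tsum_mul_Bspline_three {y : ℝ} (h0 : 0 ≤ y) (h1 : y ≤ 1) (c : ℤ → ℝ) (n : ℤ) :
    ∑' k : ℤ, c k * Bspline 3 (n + y - k) =
      (c (n - 1) * (1 - y) ^ 3 + c n * (3 * y ^ 3 - 6 * y ^ 2 + 4)
        + c (n + 1) * (-3 * y ^ 3 + 3 * y ^ 2 + 3 * y + 1) + c (n + 2) * y ^ 3) / 6 := by
  have hsupp : ∀ k ∉ ({n - 1, n, n + 1, n + 2} : Finset ℤ),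
      c k * Bspline 3 (n + y - k) = 0 := by
    intro k hk
    simp only [Finset.mem_insert, Finset.mem_singleton, not_or] at hk
    rw [Bspline_three_eq_zero_of_two_le_abs, mul_zero]
    rcases (by omega : k ≤ n - 2 ∨ n + 3 ≤ k) with hk | hk
    · have : (k : ℝ) ≤ n - 2 := by exact_mod_cast hk
      exact le_abs.2 (.inl (by linarith))
    · have : (n : ℝ) + 3 ≤ k := by exact_mod_cast hk
      exact le_abs.2 (.inr (by linarith))
  rw [tsum_eq_sum hsupp,
    Finset.sum_insert (by simp only [Finset.mem_insert, Finset.mem_singleton]; omega),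
    Finset.sum_insert (by simp), Finset.sum_insert (by simp), Finset.sum_singleton]
  push_cast
  rw [show (n : ℝ) + y - (n - 1) = y + 1 by ring, show (n : ℝ) + y - n = y by ring,
    show (n : ℝ) + y - (n + 1) = y - 1 by ring, show (n : ℝ) + y - (n + 2) = y - 2 by ring,
    Bspline_three_add_one h0 h1, Bspline_three_self h0 h1, Bspline_three_sub_one h0 h1,
    Bspline_three_sub_two h0 h1]
  ring

/-- the quasi-interpolation scheme with cubic B-splines and coefficients
`(a₀, a₁) = (8/6, −1/6)` reproduces polynomials of degree at most three: for every
polynomial `q` with `deg q ≤ 3` and every `x ∈ ℝ`,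
`Σ_{k∈ℤ} ((8/6) q(k) − (1/6) q(k−1) − (1/6) q(k+1)) 𝓑₃(x − k) = q(x)`. -/
theorem cubic_spline_quasi_interpolation_reproduces_cubics
    (q : Polynomial ℝ) (hq : q.degree ≤ 3) (x : ℝ) :
    ∑' k : ℤ,
        (8 / 6 * q.eval (k : ℝ) - 1 / 6 * q.eval ((k : ℝ) - 1)
            - 1 / 6 * q.eval ((k : ℝ) + 1)) * Bspline 3 (x - (k : ℝ))
      = q.eval x := by
  obtain ⟨n, y, h0, h1, rfl⟩ : ∃ n : ℤ, ∃ y : ℝ, 0 ≤ y ∧ y ≤ 1 ∧ x = n + y :=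
    ⟨⌊x⌋, Int.fract x, Int.fract_nonneg x, (Int.fract_lt_one x).le,
      (Int.floor_add_fract x).symm⟩
  rw [tsum_mul_Bspline_three h0 h1]
  have hdeg : q.natDegree < 4 := Nat.lt_succ_of_le (Polynomial.natDegree_le_of_degree_le hq)
  simp only [Polynomial.eval_eq_sum_range' hdeg, Finset.sum_range_succ, Finset.sum_range_zero]
  push_cast
  ring
end
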